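/- Weak duality for the superellipsoid support function: for any x ∈ ℝ^m, any feasible (y_1, …, y_K) with y_{k,i}² ≤ y_{k+1,i} for k ≤ K−1 and ‖y_K‖₂ ≤ 1, and any multipliers α_{k,i} > 0 (k ≤ K−1) and α_K ≥ 0 with ‖α_{K−1}‖₂ ≤ α_K, one has x^T y_1 ≤ α_K + ∑_i x_i²/(4 α_{1,i}) + ∑_{k=2}^{K−1} ∑_i α_{k−1,i}²/(4 α_{k,i}). -/
import Mathlib

lemma step_ineq (c a b bn : ℝ) (hc : 0 < c) (hb : b ^ 2 ≤ bn) :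
    a * b ≤ a ^ 2 / (4 * c) + c * bn := by
  have h : a * b ≤ a ^ 2 / (4 * c) + c * b ^ 2 := by
    rw [div_add' _ _ _ (by positivity), le_div_iff₀ (by positivity)]
    nlinarith [sq_nonneg (a - 2 * c * b)]
  nlinarith

/-- Weak duality for the superellipsoid support problem: any feasible chain
`(y_1, …, y_K)` and any multipliers `α_{k,i} > 0`, `α_K ≥ 0` with `‖α_{K−1}‖₂ ≤ α_K`
give `xᵀ y_1 ≤ α_K + ∑ i x_i²/(4 α_{1,i}) + ∑_{k=2}^{K−1} ∑ i α_{k−1,i}²/(4 α_{k,i})`. -/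
theorem weak_duality_superellipsoid (K m : ℕ) (hK : 2 ≤ K) (hm : 1 ≤ m)
    (x : Fin m → ℝ) (y : ℕ → Fin m → ℝ) (α : ℕ → Fin m → ℝ) (αK : ℝ)
    (hy : ∀ k, 1 ≤ k → k ≤ K - 1 → ∀ i, (y k i) ^ 2 ≤ y (k + 1) i)
    (hyK : Real.sqrt (∑ i, (y K i) ^ 2) ≤ 1)
    (hα : ∀ k, 1 ≤ k → k ≤ K - 1 → ∀ i, 0 < α k i)
    (hαK : 0 ≤ αK)
    (hαcone : Real.sqrt (∑ i, (α (K - 1) i) ^ 2) ≤ αK) :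
    ∑ i, x i * y 1 i ≤
      αK + ∑ i, (x i) ^ 2 / (4 * α 1 i) +
        ∑ k ∈ Finset.Icc 2 (K - 1), ∑ i, (α (k - 1) i) ^ 2 / (4 * α k i) := by
  have hK1 : 1 ≤ K - 1 := by omega
  -- main induction
  have main : ∀ n, 1 ≤ n → n ≤ K - 1 →
      ∑ i, x i * y 1 i ≤
        ∑ i, (x i) ^ 2 / (4 * α 1 i) +
        (∑ k ∈ Finset.Icc 2 n, ∑ i, (α (k - 1) i) ^ 2 / (4 * α k i)) +
        ∑ i, α n i * y (n + 1) i := by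
    intro n hn1 hn2
    induction n with
    | zero => omega
    | succ n ih =>
      rcases Nat.eq_or_lt_of_le hn1 with h1 | h1
      · -- n + 1 = 1, base case
        have hn0 : n = 0 := by omega
        subst hn0
        simp only [Finset.Icc_self, show Finset.Icc 2 1 = ∅ by decide, Finset.sum_empty,
          add_zero]
        have : ∀ i, x i * y 1 i ≤ (x i) ^ 2 / (4 * α 1 i) + α 1 i * y 2 i := fun i =>
          step_ineq _ _ _ _ (hα 1 le_rfl hK1 i) (hy 1 le_rfl hK1 i)
        calc ∑ i, x i * y 1 i ≤ ∑ i, ((x i) ^ 2 / (4 * α 1 i) + α 1 i * y 2 i) :=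
              Finset.sum_le_sum fun i _ => this i
          _ = _ := by rw [Finset.sum_add_distrib]
      · -- inductive step: 1 ≤ n, n + 1 ≤ K - 1
        have hn1' : 1 ≤ n := by omega
        have hnK : n ≤ K - 1 := by omega
        have ihn := ih hn1' hnK
        have hstep : ∑ i, α n i * y (n + 1) i ≤
            (∑ i, (α n i) ^ 2 / (4 * α (n + 1) i)) + ∑ i, α (n + 1) i * y (n + 2) i := by
          have : ∀ i, α n i * y (n + 1) i ≤
              (α n i) ^ 2 / (4 * α (n + 1) i) + α (n + 1) i * y (n + 2) i := fun i =>
            step_ineq _ _ _ _ (hα (n + 1) (by omega) hn2 i) (hy (n + 1) (by omega) hn2 i)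
          calc ∑ i, α n i * y (n + 1) i
              ≤ ∑ i, ((α n i) ^ 2 / (4 * α (n + 1) i) + α (n + 1) i * y (n + 2) i) :=
                Finset.sum_le_sum fun i _ => this i
            _ = _ := by rw [Finset.sum_add_distrib]
        have hsum : ∑ k ∈ Finset.Icc 2 (n + 1), ∑ i, (α (k - 1) i) ^ 2 / (4 * α k i)
            = (∑ k ∈ Finset.Icc 2 n, ∑ i, (α (k - 1) i) ^ 2 / (4 * α k i))
              + ∑ i, (α n i) ^ 2 / (4 * α (n + 1) i) := by
          rw [Finset.sum_Icc_succ_top (show 2 ≤ n + 1 by omega)]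
          simp
        rw [hsum]
        linarith
  have hmain := main (K - 1) hK1 le_rfl
  have hKeq : K - 1 + 1 = K := by omega
  rw [hKeq] at hmain
  -- bound the tail term via Cauchy-Schwarz
  have htail : ∑ i, α (K - 1) i * y K i ≤ αK := by
    calc ∑ i, α (K - 1) i * y K i
        ≤ Real.sqrt (∑ i, (α (K - 1) i) ^ 2) * Real.sqrt (∑ i, (y K i) ^ 2) :=
          Real.sum_mul_le_sqrt_mul_sqrt _ _ _
      _ ≤ αK * 1 := by
          apply mul_le_mul hαcone hyK (Real.sqrt_nonneg _) hαK
      _ = αK := mul_one _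
  linarith
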